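/- Let N ∈ ℕ, p ∈ [0,1], R > 0, a ≥ 0 and φ_LOS ∈ ℝ. For each k ∈ {0,…,N} define C_LOS(k) = ∫_{[0,2π]^k} log₂(1 + |a + ∑_{i=1}^k e^{iθ_i}|²) dU_k(θ), where U_k is the uniform probability measure on [0,2π]^k; in particular C_LOS(0) = log₂(1+a²). Let B₁,…,B_N be i.i.d. Bernoulli(p) and φ̃₁,…,φ̃_N i.i.d. uniform on [0,2π], all jointly independent, and define C_erg,LOS = ∫_{[0,2π]^N} log₂(1 + |a e^{iφ_LOS} + ∑_{i=1}^N B_i e^{i(φ̃_i+θ_i)}|²) dU_N(θ). Then almost surely C_erg,LOS = C_LOS(∑_{i=1}^N B_i), and the outage probability satisfies P(C_erg,LOS < R) = ∑_{k=0}^N (N choose k) p^k (1−p)^{N−k} · 1{C_LOS(k) < R}. -/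

import Mathlib

open MeasureTheory ProbabilityTheory
open scoped ENNReal

/-- The uniform probability measure on `[0, 2π]`. -/
noncomputable def unifIcc : Measure ℝ :=
  (ENNReal.ofReal (2 * Real.pi))⁻¹ • (volume.restrict (Set.Icc 0 (2 * Real.pi)))

/-- The uniform probability measure on `[0, 2π]^k`. -/
noncomputable def unifPi (k : ℕ) : Measure (Fin k → ℝ) :=
  Measure.pi fun _ => unifIcc

/-- The Bernoulli(p) law on `ℕ` (mass `p` at `1`, mass `1 − p` at `0`). -/
noncomputable def bernoulliNat (p : ℝ) : Measure ℕ :=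
  ENNReal.ofReal p • Measure.dirac 1 + ENNReal.ofReal (1 - p) • Measure.dirac 0

/-- Index-dependent codomain for the joint family `(B₁, …, B_N, φ̃₁, …, φ̃_N)`. -/
def mixSpace (N : ℕ) : Fin N ⊕ Fin N → Type
  | .inl _ => ℕ
  | .inr _ => ℝ

/-- The family `(B₁, …, B_N, φ̃₁, …, φ̃_N)` as a single indexed family of random variables. -/
def mixVar {Ω : Type*} {N : ℕ} (B : Fin N → Ω → ℕ) (φ : Fin N → Ω → ℝ) :
    ∀ j : Fin N ⊕ Fin N, Ω → mixSpace N j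
  | .inl i => B i
  | .inr i => φ i

/-- The measurable-space structure on the mixed codomains. -/
def mixMS (N : ℕ) : ∀ j : Fin N ⊕ Fin N, MeasurableSpace (mixSpace N j)
  | .inl _ => inferInstanceAs (MeasurableSpace ℕ)
  | .inr _ => inferInstanceAs (MeasurableSpace ℝ)

/-- The deterministic LOS ergodic capacity with `k` active links:
`C_LOS(k) = ∫_{[0,2π]^k} log₂(1 + |a + ∑_{i=1}^k e^{iθ_i}|²) dU_k(θ)`. -/
noncomputable def ergCapLOS (a : ℝ) (k : ℕ) : ℝ :=
  ∫ θ : Fin k → ℝ,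
    Real.logb 2 (1 + ‖(a : ℂ) + ∑ i, Complex.exp ((θ i : ℂ) * Complex.I)‖ ^ 2)
    ∂(unifPi k)

/-- The random ergodic capacity under phase hopping with a LOS component `a e^{iφ_LOS}`:
`C_erg,LOS(ω) = ∫_{[0,2π]^N} log₂(1 + |a e^{iφ_LOS} + ∑_{i=1}^N B_i(ω) e^{i(φ̃_i(ω) + θ_i)}|²) dU_N(θ)`. -/
noncomputable def ergCapRandLOS {Ω : Type*} {N : ℕ} (a φLOS : ℝ)
    (B : Fin N → Ω → ℕ) (φ : Fin N → Ω → ℝ) (ω : Ω) : ℝ :=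
  ∫ θ : Fin N → ℝ,
    Real.logb 2 (1 + ‖
      ((a : ℂ) * Complex.exp ((φLOS : ℂ) * Complex.I) +
        ∑ i, (B i ω : ℂ) * Complex.exp ((↑(φ i ω + θ i) : ℂ) * Complex.I))‖ ^ 2) ∂(unifPi N)

/-!
Because the RIS phases `θ_i` hop uniformly and independently, every unblocked cascaded link
contributes a term `e^{i(φ̃_i + θ_i)}` that is again uniform on the unit circle, whatever `φ̃_i` is;
rotating the whole channel by `e^{-iφ_LOS}` turns the LOS term into the real number `a` without
changing `|H|`. Blocked links contribute nothing, so once every `B_i ∈ {0, 1}` (almost surely) the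
phase-hopping average only sees the number `∑ B_i` of unblocked links: `C_erg,LOS = C_LOS(∑ B_i)`.
That number is binomial `(N, p)`, which gives the outage probability.
-/

open Complex
open scoped Finset

instance : IsProbabilityMeasure unifIcc := by
  constructor
  rw [unifIcc, Measure.smul_apply, Measure.restrict_apply_univ, Real.volume_Icc, sub_zero,
    smul_eq_mul, ENNReal.inv_mul_cancel (by simp [Real.pi_pos]) ENNReal.ofReal_ne_top]

lemma integral_unifIcc_comp_add_left {E : Type*} [NormedAddCommGroup E] [NormedSpace ℝ E]
    {g : ℝ → E} (hg : Function.Periodic g (2 * Real.pi)) (c : ℝ) :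
    ∫ x, g (c + x) ∂unifIcc = ∫ x, g x ∂unifIcc := by
  have h2π : (0 : ℝ) ≤ 2 * Real.pi := by positivity
  simp only [unifIcc, integral_smul_measure, integral_Icc_eq_integral_Ioc,
    ← intervalIntegral.integral_of_le h2π, intervalIntegral.integral_comp_add_left g c]
  simpa using congrArg _ (hg.intervalIntegral_add_eq c 0)

lemma map_unifIcc_comp_add_left {β : Type*} [MeasurableSpace β] {g : ℝ → β} (hg : Measurable g)
    (hper : Function.Periodic g (2 * Real.pi)) (c : ℝ) :
    unifIcc.map (fun x => g (c + x)) = unifIcc.map g := by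
  ext S hS
  have hgc : Measurable fun x => g (c + x) := hg.comp (measurable_const_add c)
  rw [Measure.map_apply hgc hS, Measure.map_apply hg hS, ← ofReal_measureReal,
    ← ofReal_measureReal, ← integral_indicator_one (hgc hS), ← integral_indicator_one (hg hS)]
  exact congrArg ENNReal.ofReal
    (integral_unifIcc_comp_add_left (hper.comp (S.indicator (1 : β → ℝ))) c)

noncomputable def unifCircle : Measure ℂ :=
  unifIcc.map fun x : ℝ => exp (x * I)

instance : IsProbabilityMeasure unifCircle :=
  Measure.isProbabilityMeasure_map (by fun_prop)

lemma map_unifIcc_exp_add (c : ℝ) :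
    unifIcc.map (fun x : ℝ => exp (↑(c + x) * I)) = unifCircle :=
  map_unifIcc_comp_add_left (g := fun x : ℝ => exp (x * I)) (by fun_prop)
    (fun x => by simp [add_mul, exp_add]) c

lemma map_unifPi_exp_add {n : ℕ} (δ : Fin n → ℝ) :
    (unifPi n).map (fun θ i => exp (↑(δ i + θ i) * I)) = Measure.pi fun _ => unifCircle := by
  rw [unifPi,
    Measure.pi_map_pi (f := fun i (x : ℝ) => exp (↑(δ i + x) * I)) (fun i => by fun_prop)]
  simp_rw [map_unifIcc_exp_add]

lemma map_unifPi_exp (n : ℕ) :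
    (unifPi n).map (fun θ i => exp (θ i * I)) = Measure.pi fun _ => unifCircle := by
  simpa using map_unifPi_exp_add (fun _ : Fin n => 0)

lemma pi_map_finset_sum {ι M : Type*} [Fintype ι] [AddCommMonoid M] [MeasurableSpace M]
    [MeasurableAdd₂ M] (ν : Measure M) [IsProbabilityMeasure ν] (s : Finset ι) :
    (Measure.pi fun _ : ι => ν).map (fun z => ∑ i ∈ s, z i) =
      (Measure.pi fun _ : Fin #s => ν).map (fun z => ∑ j, z j) := by
  classical
  let e : Fin #s ≃ s := s.equivFin.symm
  have hrestrict : (Measure.pi fun _ : ι => ν).map (fun z (i : s) => z i) =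
      Measure.pi fun _ : s => ν := by
    have h := (measurePreserving_piEquivPiSubtypeProd (fun _ : ι => ν) (· ∈ s)).map_eq
    rw [show (fun z (i : s) => z i) =
        Prod.fst ∘ MeasurableEquiv.piEquivPiSubtypeProd (fun _ : ι => M) (· ∈ s) from rfl,
      ← Measure.map_map measurable_fst (MeasurableEquiv.measurable _), h, Measure.map_fst_prod,
      measure_univ, one_smul]
    congr; exact Subsingleton.elim _ _
  have hreindex := (measurePreserving_piCongrLeft (fun _ : s => ν) e).map_eq
  have hsum : (fun z : ι → M => ∑ i ∈ s, z i) =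
      (fun y : s → M => ∑ i, y i) ∘ fun z (i : s) => z i := by
    ext z; exact (s.sum_coe_sort z).symm
  rw [hsum, ← Measure.map_map (by fun_prop) (by fun_prop), hrestrict, ← hreindex,
    Measure.map_map (by fun_prop) (MeasurableEquiv.measurable _)]
  congr 1
  ext z
  simp only [Function.comp_apply, MeasurableEquiv.coe_piCongrLeft]
  exact (Equiv.sum_comp e _).symm.trans (by simp)

lemma integral_unifPi_finset_sum_exp {E : Type*} [NormedAddCommGroup E] [NormedSpace ℝ E]
    {g : ℂ → E} (hg : StronglyMeasurable g) {n : ℕ} (s : Finset (Fin n)) (δ : Fin n → ℝ) :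
    ∫ θ, g (∑ i ∈ s, exp (↑(δ i + θ i) * I)) ∂unifPi n =
      ∫ θ : Fin #s → ℝ, g (∑ j, exp (θ j * I)) ∂unifPi #s := by
  have hlaw : (unifPi n).map (fun θ => ∑ i ∈ s, exp (↑(δ i + θ i) * I)) =
      (unifPi #s).map (fun θ => ∑ j, exp (θ j * I)) := by
    have hδ : (unifPi n).map (fun θ => ∑ i ∈ s, exp (↑(δ i + θ i) * I)) =
        ((unifPi n).map fun θ i => exp (↑(δ i + θ i) * I)).map fun z => ∑ i ∈ s, z i :=
      (Measure.map_map (g := fun z : Fin n → ℂ => ∑ i ∈ s, z i) (by fun_prop) (by fun_prop)).symm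
    have h0 : (unifPi #s).map (fun θ => ∑ j, exp (θ j * I)) =
        ((unifPi #s).map fun θ j => exp (θ j * I)).map fun z => ∑ j, z j :=
      (Measure.map_map (g := fun z : Fin #s → ℂ => ∑ j, z j) (by fun_prop) (by fun_prop)).symm
    rw [hδ, h0, map_unifPi_exp_add, map_unifPi_exp, pi_map_finset_sum]
  calc _ = ∫ z, g z ∂(unifPi n).map (fun θ => ∑ i ∈ s, exp (↑(δ i + θ i) * I)) :=
        (integral_map (Measurable.aemeasurable (by fun_prop)) hg.aestronglyMeasurable).symm
    _ = _ := by
      rw [hlaw, integral_map (Measurable.aemeasurable (by fun_prop)) hg.aestronglyMeasurable]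

lemma integral_unifPi_sum_natCast_mul_exp {E : Type*} [NormedAddCommGroup E] [NormedSpace ℝ E]
    {g : ℂ → E} (hg : StronglyMeasurable g) {n : ℕ} (b : Fin n → ℕ) (hb : ∀ i, b i ≤ 1)
    (δ : Fin n → ℝ) :
    ∫ θ, g (∑ i, (b i : ℂ) * exp (↑(δ i + θ i) * I)) ∂unifPi n =
      ∫ θ : Fin (∑ i, b i) → ℝ, g (∑ j, exp (θ j * I)) ∂unifPi (∑ i, b i) := by
  classical
  set s := Finset.univ.filter fun i => b i = 1
  have hb01 (i : Fin n) : b i = 0 ∨ b i = 1 := Nat.le_one_iff_eq_zero_or_eq_one.1 (hb i)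
  have hcard : ∑ i, b i = s.card := by
    rw [Finset.card_filter]
    exact Finset.sum_congr rfl fun i _ => by rcases hb01 i with h | h <;> simp [h]
  have hsum (θ : Fin n → ℝ) : ∑ i, (b i : ℂ) * exp (↑(δ i + θ i) * I) =
      ∑ i ∈ s, exp (↑(δ i + θ i) * I) := by
    rw [Finset.sum_filter]
    exact Finset.sum_congr rfl fun i _ => by rcases hb01 i with h | h <;> simp [h]
  simp_rw [hsum]
  rw [hcard]
  exact integral_unifPi_finset_sum_exp hg s δ

lemma norm_ofReal_mul_exp_add_sum {ι : Type*} (s : Finset ι) (a φ : ℝ) (c : ι → ℂ)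
    (ψ : ι → ℝ) :
    ‖(a : ℂ) * exp (φ * I) + ∑ i ∈ s, c i * exp (ψ i * I)‖ =
      ‖(a : ℂ) + ∑ i ∈ s, c i * exp (↑(ψ i - φ) * I)‖ := by
  have hrot : (a : ℂ) * exp (φ * I) + ∑ i ∈ s, c i * exp (ψ i * I) =
      exp (φ * I) * ((a : ℂ) + ∑ i ∈ s, c i * exp (↑(ψ i - φ) * I)) := by
    rw [mul_add, Finset.mul_sum]
    congr 1
    · ring
    refine Finset.sum_congr rfl fun i _ => ?_
    rw [mul_left_comm, ← exp_add]
    push_cast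
    ring_nf
  rw [hrot, norm_mul, norm_exp_ofReal_mul_I, one_mul]

lemma ergCapRandLOS_eq_ergCapLOS {Ω : Type*} {N : ℕ} (a φLOS : ℝ) (B : Fin N → Ω → ℕ)
    (φ : Fin N → Ω → ℝ) {ω : Ω} (hB : ∀ i, B i ω ≤ 1) :
    ergCapRandLOS a φLOS B φ ω = ergCapLOS a (∑ i, B i ω) := by
  have hrot (θ : Fin N → ℝ) :
      ‖(a : ℂ) * exp (φLOS * I) + ∑ i, (B i ω : ℂ) * exp (↑(φ i ω + θ i) * I)‖ =
        ‖(a : ℂ) + ∑ i, (B i ω : ℂ) * exp (↑(φ i ω - φLOS + θ i) * I)‖ := by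
    rw [norm_ofReal_mul_exp_add_sum]
    simp_rw [add_sub_right_comm]
  simp_rw [ergCapRandLOS, hrot]
  have hg : Measurable fun z : ℂ => Real.logb 2 (1 + ‖(a : ℂ) + z‖ ^ 2) := by
    unfold Real.logb; fun_prop
  exact integral_unifPi_sum_natCast_mul_exp hg.stronglyMeasurable _ hB _

instance (p : ℝ) : IsFiniteMeasure (bernoulliNat p) :=
  ⟨by simp [bernoulliNat]⟩

lemma bernoulliNat_ae_le_one (p : ℝ) : ∀ᵐ x ∂bernoulliNat p, x ≤ 1 := by
  rw [ae_iff]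
  simp [bernoulliNat]

lemma pi_bernoulliNat_ae_le_one {ι : Type*} [Fintype ι] (p : ℝ) :
    ∀ᵐ b ∂Measure.pi (fun _ : ι => bernoulliNat p), ∀ i, b i ≤ 1 :=
  Filter.eventually_all.2 fun i =>
    (Measure.tendsto_eval_ae_ae (μ := fun _ : ι => bernoulliNat p) (i := i)).eventually
      (bernoulliNat_ae_le_one p)

lemma pi_bernoulliNat_singleton_indicator {ι : Type*} [Fintype ι] [DecidableEq ι] {p : ℝ}
    (hp0 : 0 ≤ p) (hp1 : p ≤ 1) (s : Finset ι) :
    Measure.pi (fun _ : ι => bernoulliNat p) {fun i => if i ∈ s then 1 else 0} =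
      ENNReal.ofReal (p ^ #s * (1 - p) ^ (Fintype.card ι - #s)) := by
  have hval (i : ι) : bernoulliNat p {if i ∈ s then 1 else 0} =
      if i ∈ s then ENNReal.ofReal p else ENNReal.ofReal (1 - p) := by
    split_ifs <;> simp [bernoulliNat]
  rw [Measure.pi_singleton, Finset.prod_congr rfl fun i _ => hval i, Finset.prod_ite,
    Finset.prod_const, Finset.prod_const, Finset.filter_mem_eq_inter, Finset.univ_inter,
    Finset.filter_notMem_eq_sdiff, Finset.card_univ_sdiff, ENNReal.ofReal_mul (by positivity),
    ENNReal.ofReal_pow hp0, ENNReal.ofReal_pow (by linarith)]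

lemma map_sum_pi_bernoulliNat {ι : Type*} [Fintype ι] {p : ℝ} (hp0 : 0 ≤ p) (hp1 : p ≤ 1) :
    (Measure.pi fun _ : ι => bernoulliNat p).map (fun b => ∑ i, b i) =
      binomial (Fintype.card ι) ⟨p, hp0, hp1⟩ := by
  classical
  let ind : Finset ι → ι → ℕ := fun s i => if i ∈ s then 1 else 0
  have hind : ind.Injective := fun s t h => by
    ext i
    have := congrFun h i
    simp only [ind] at this
    split_ifs at this <;> simp_all
  have hsum_ind (s : Finset ι) : ∑ i, ind s i = #s := by simp [ind]
  refine Measure.ext_of_singleton fun k => ?_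
  have hfiber : (fun b : ι → ℕ => ∑ i, b i) ⁻¹' {k} =ᵐ[Measure.pi fun _ => bernoulliNat p]
      ⋃ s ∈ Finset.powersetCard k Finset.univ, {ind s} := by
    filter_upwards [pi_bernoulliNat_ae_le_one p] with b hb
    have hb_eq : b = ind (Finset.univ.filter fun i => b i = 1) := funext fun i => by
      rcases Nat.le_one_iff_eq_zero_or_eq_one.1 (hb i) with h | h <;> simp [ind, h]
    change (∑ i, b i = k) = (b ∈ ⋃ s ∈ Finset.powersetCard k Finset.univ, {ind s})
    simp only [Set.mem_iUnion, Set.mem_singleton_iff, Finset.mem_powersetCard, exists_prop,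
      eq_iff_iff]
    constructor
    · rintro rfl
      exact ⟨_, ⟨Finset.subset_univ _, by rw [← hsum_ind, ← hb_eq]⟩, hb_eq⟩
    · rintro ⟨s, ⟨-, rfl⟩, rfl⟩
      exact hsum_ind s
  rw [Measure.map_apply (by fun_prop) (measurableSet_singleton k), measure_congr hfiber,
    measure_biUnion_finset (fun s _ t _ hst => Set.disjoint_singleton.2 (hind.ne hst))
      (fun _ _ => measurableSet_singleton _),
    Finset.sum_congr rfl fun s hs => by
      rw [pi_bernoulliNat_singleton_indicator hp0 hp1, (Finset.mem_powersetCard.1 hs).2],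
    Finset.sum_const, Finset.card_powersetCard, Finset.card_univ, binomial_singleton,
    nsmul_eq_mul, ← ENNReal.ofReal_natCast, ← ENNReal.ofReal_mul (by positivity), mul_assoc]

lemma map_sum_eq_binomial {Ω ι : Type*} [MeasurableSpace Ω] {P : Measure Ω}
    [IsProbabilityMeasure P] [Fintype ι] {p : ℝ} (hp0 : 0 ≤ p) (hp1 : p ≤ 1) {B : ι → Ω → ℕ}
    (hBmeas : ∀ i, Measurable (B i)) (hBlaw : ∀ i, P.map (B i) = bernoulliNat p)
    (hindep : iIndepFun B P) :
    P.map (fun ω => ∑ i, B i ω) = binomial (Fintype.card ι) ⟨p, hp0, hp1⟩ := by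
  have hjoint : P.map (fun ω i => B i ω) = Measure.pi fun _ => bernoulliNat p := by
    rw [hindep.map_fun_eq_pi_map fun i => (hBmeas i).aemeasurable]
    exact congrArg Measure.pi (funext hBlaw)
  have hcomp : P.map (fun ω => ∑ i, B i ω) = (P.map fun ω i => B i ω).map fun b => ∑ i, b i :=
    (Measure.map_map (g := fun b : ι → ℕ => ∑ i, b i) (by fun_prop)
      (measurable_pi_lambda _ hBmeas)).symm
  rw [hcomp, hjoint, map_sum_pi_bernoulliNat hp0 hp1]

theorem stmt1_general {Ω : Type*} [MeasurableSpace Ω] (P : Measure Ω) [IsProbabilityMeasure P]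
    (N : ℕ) (p : ℝ) (hp0 : 0 ≤ p) (hp1 : p ≤ 1) (R : ℝ)
    (a : ℝ) (φLOS : ℝ)
    (B : Fin N → Ω → ℕ) (φ : Fin N → Ω → ℝ)
    (hBmeas : ∀ i, Measurable (B i))
    (hBlaw : ∀ i, Measure.map (B i) P = bernoulliNat p)
    (hindep : iIndepFun (m := mixMS N) (mixVar B φ) P) :
    (∀ᵐ ω ∂P, ergCapRandLOS a φLOS B φ ω = ergCapLOS a (∑ i, B i ω)) ∧
    (P {ω | ergCapRandLOS a φLOS B φ ω < R}).toReal =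
      ∑ k ∈ Finset.range (N + 1),
        (N.choose k : ℝ) * p ^ k * (1 - p) ^ (N - k) * (if ergCapLOS a k < R then 1 else 0) := by
  have hB01 : ∀ᵐ ω ∂P, ∀ i, B i ω ≤ 1 := ae_all_iff.2 fun i =>
    ae_of_ae_map (hBmeas i).aemeasurable (by rw [hBlaw i]; exact bernoulliNat_ae_le_one p)
  have hcap : ∀ᵐ ω ∂P, ergCapRandLOS a φLOS B φ ω = ergCapLOS a (∑ i, B i ω) :=
    hB01.mono fun ω => ergCapRandLOS_eq_ergCapLOS a φLOS B φ
  refine ⟨hcap, ?_⟩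
  have hlaw : P.map (fun ω => ∑ i, B i ω) = binomial N ⟨p, hp0, hp1⟩ := by
    have h := map_sum_eq_binomial hp0 hp1 hBmeas hBlaw
      (hindep.precomp (g := (Sum.inl : Fin N → Fin N ⊕ Fin N)) Sum.inl_injective)
    rwa [Fintype.card_fin] at h
  calc (P {ω | ergCapRandLOS a φLOS B φ ω < R}).toReal
      = P.real ((fun ω => ∑ i, B i ω) ⁻¹' {k | ergCapLOS a k < R}) :=
        congrArg ENNReal.toReal <| measure_congr <| hcap.mono fun ω h => by
          change (_ < R) = (_ < R)
          rw [h]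
    _ = (binomial N ⟨p, hp0, hp1⟩).real {k | ergCapLOS a k < R} := by
        rw [← hlaw, map_measureReal_apply (by fun_prop) .of_discrete]
    _ = _ := by
        rw [← integral_indicator_one .of_discrete, integral_binomial, Nat.range_succ_eq_Iic]
        simp [Set.indicator_apply]

/-- with a LOS component `a e^{iφ_LOS}` (`a ≥ 0`), i.i.d. Bernoulli(p) gains
`B_i` and i.i.d. uniform phases `φ̃_i`, all jointly independent, the random ergodic capacity
`C_erg,LOS` is a.s. equal to `C_LOS(∑ i B_i)`, and
`P(C_erg,LOS < R) = ∑_{k=0}^N (N choose k) p^k (1−p)^{N−k} 1{C_LOS(k) < R}`. -/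
theorem stmt1 {Ω : Type*} [MeasurableSpace Ω] (P : Measure Ω) [IsProbabilityMeasure P]
    (N : ℕ) (p : ℝ) (hp0 : 0 ≤ p) (hp1 : p ≤ 1) (R : ℝ) (hR : 0 < R)
    (a : ℝ) (ha : 0 ≤ a) (φLOS : ℝ)
    (B : Fin N → Ω → ℕ) (φ : Fin N → Ω → ℝ)
    (hBmeas : ∀ i, Measurable (B i)) (hφmeas : ∀ i, Measurable (φ i))
    (hBlaw : ∀ i, Measure.map (B i) P = bernoulliNat p)
    (hφlaw : ∀ i, Measure.map (φ i) P = unifIcc)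
    (hindep : iIndepFun (m := mixMS N) (mixVar B φ) P) :
    (∀ᵐ ω ∂P, ergCapRandLOS a φLOS B φ ω = ergCapLOS a (∑ i, B i ω)) ∧
    (P {ω | ergCapRandLOS a φLOS B φ ω < R}).toReal =
      ∑ k ∈ Finset.range (N + 1),
        (N.choose k : ℝ) * p ^ k * (1 - p) ^ (N - k) * (if ergCapLOS a k < R then 1 else 0) :=
  stmt1_general P N p hp0 hp1 R a φLOS B φ hBmeas hBlaw hindep
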